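/- arXiv:1811.12186 — 2 statements merged into one kernel-verified Lean document; each statement's English description precedes it below -/
import Mathlib

section
/- For arbitrary smooth functions Φ¹, Φ², Φ³, Φ⁴, Φ⁵ : ℝ³ → ℝ, define Ψ¹ = ∂₃Φ¹ − ∂₁Φ⁴, Ψ² = ∂₃Φ² − ∂₂Φ⁴ − ∂₁Φ⁵, Ψ³ = ∂₃Φ³ − ∂₂Φ⁵, Ψ⁴ = ∂₂∂₂Φ¹ + ∂₁∂₁Φ³ − ∂₁∂₂Φ². Then the second-order identity ∂₂∂₂Ψ¹ + ∂₁∂₁Ψ³ − ∂₁∂₂Ψ² − ∂₃Ψ⁴ = 0 holds identically. -/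
noncomputable def pd (i : Fin 3) (f : (Fin 3 → ℝ) → ℝ) : (Fin 3 → ℝ) → ℝ :=
  fun x => fderiv ℝ f x (Pi.single i 1)

lemma pd_contDiff {f : (Fin 3 → ℝ) → ℝ} (hf : ContDiff ℝ (⊤ : ℕ∞) f) (i : Fin 3) :
    ContDiff ℝ (⊤ : ℕ∞) (pd i f) := by
  have : pd i f = (ContinuousLinearMap.apply ℝ ℝ (Pi.single i 1)) ∘ (fderiv ℝ f) := rfl
  rw [this]
  exact (ContinuousLinearMap.apply ℝ ℝ (Pi.single i 1)).contDiff.comp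
    (hf.fderiv_right (m := (⊤ : ℕ∞)) (by exact_mod_cast le_top))

lemma pd_sub {f g : (Fin 3 → ℝ) → ℝ} (hf : ContDiff ℝ (⊤ : ℕ∞) f) (hg : ContDiff ℝ (⊤ : ℕ∞) g)
    (i : Fin 3) : pd i (fun x => f x - g x) = fun x => pd i f x - pd i g x := by
  funext x
  simp only [pd, fderiv_fun_sub (hf.differentiable (by simp) x) (hg.differentiable (by simp) x),
    ContinuousLinearMap.sub_apply]

lemma pd_add {f g : (Fin 3 → ℝ) → ℝ} (hf : ContDiff ℝ (⊤ : ℕ∞) f) (hg : ContDiff ℝ (⊤ : ℕ∞) g)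
    (i : Fin 3) : pd i (fun x => f x + g x) = fun x => pd i f x + pd i g x := by
  funext x
  simp only [pd, fderiv_fun_add (hf.differentiable (by simp) x) (hg.differentiable (by simp) x),
    ContinuousLinearMap.add_apply]

lemma pd_comm {f : (Fin 3 → ℝ) → ℝ} (hf : ContDiff ℝ (⊤ : ℕ∞) f) (i j : Fin 3) :
    pd i (pd j f) = pd j (pd i f) := by
  funext x
  have hsymm : IsSymmSndFDerivAt ℝ f x := hf.contDiffAt.isSymmSndFDerivAt (by rw [minSmoothness_of_isRCLikeNormedField]; exact WithTop.coe_le_coe.mpr le_top)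
  have hdf : DifferentiableAt ℝ (fderiv ℝ f) x :=
    ((hf.fderiv_right (m := (⊤ : ℕ∞)) (by simp)).differentiable (by simp) x)
  have h1 : ∀ (k l : Fin 3), pd k (pd l f) x
      = fderiv ℝ (fderiv ℝ f) x (Pi.single k 1) (Pi.single l 1) := by
    intro k l
    have : pd l f = (ContinuousLinearMap.apply ℝ ℝ (Pi.single l 1)) ∘ (fderiv ℝ f) := rfl
    rw [show pd k (pd l f) x = fderiv ℝ (pd l f) x (Pi.single k 1) from rfl, this,
      fderiv_comp x (ContinuousLinearMap.apply ℝ ℝ (Pi.single l 1)).differentiableAt hdf]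
    simp
  rw [h1, h1, hsymm]

theorem stmt_5 (Φ1 Φ2 Φ3 Φ4 Φ5 : (Fin 3 → ℝ) → ℝ)
    (h1 : ContDiff ℝ (⊤ : ℕ∞) Φ1) (h2 : ContDiff ℝ (⊤ : ℕ∞) Φ2) (h3 : ContDiff ℝ (⊤ : ℕ∞) Φ3)
    (h4 : ContDiff ℝ (⊤ : ℕ∞) Φ4) (h5 : ContDiff ℝ (⊤ : ℕ∞) Φ5)
    (Ψ1 Ψ2 Ψ3 Ψ4 : (Fin 3 → ℝ) → ℝ)
    (hΨ1 : Ψ1 = fun x => pd 2 Φ1 x - pd 0 Φ4 x)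
    (hΨ2 : Ψ2 = fun x => pd 2 Φ2 x - pd 1 Φ4 x - pd 0 Φ5 x)
    (hΨ3 : Ψ3 = fun x => pd 2 Φ3 x - pd 1 Φ5 x)
    (hΨ4 : Ψ4 = fun x => pd 1 (pd 1 Φ1) x + pd 0 (pd 0 Φ3) x - pd 0 (pd 1 Φ2) x) :
    ∀ x, pd 1 (pd 1 Ψ1) x + pd 0 (pd 0 Ψ3) x - pd 0 (pd 1 Ψ2) x - pd 2 Ψ4 x = 0 := by
  subst hΨ1 hΨ2 hΨ3 hΨ4
  intro x
  -- smoothness abbreviations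
  have d1 : ∀ i, ContDiff ℝ (⊤ : ℕ∞) (pd i Φ1) := pd_contDiff h1
  have d2 : ∀ i, ContDiff ℝ (⊤ : ℕ∞) (pd i Φ2) := pd_contDiff h2
  have d3 : ∀ i, ContDiff ℝ (⊤ : ℕ∞) (pd i Φ3) := pd_contDiff h3
  have d4 : ∀ i, ContDiff ℝ (⊤ : ℕ∞) (pd i Φ4) := pd_contDiff h4
  have d5 : ∀ i, ContDiff ℝ (⊤ : ℕ∞) (pd i Φ5) := pd_contDiff h5
  -- expand Ψ1 term
  have E1 : pd 1 (pd 1 fun x => pd 2 Φ1 x - pd 0 Φ4 x) x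
      = pd 1 (pd 1 (pd 2 Φ1)) x - pd 1 (pd 1 (pd 0 Φ4)) x := by
    rw [pd_sub (d1 2) (d4 0), pd_sub (pd_contDiff (d1 2) 1) (pd_contDiff (d4 0) 1)]
  have E3 : pd 0 (pd 0 fun x => pd 2 Φ3 x - pd 1 Φ5 x) x
      = pd 0 (pd 0 (pd 2 Φ3)) x - pd 0 (pd 0 (pd 1 Φ5)) x := by
    rw [pd_sub (d3 2) (d5 1), pd_sub (pd_contDiff (d3 2) 0) (pd_contDiff (d5 1) 0)]
  have E2 : pd 0 (pd 1 fun x => pd 2 Φ2 x - pd 1 Φ4 x - pd 0 Φ5 x) x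
      = pd 0 (pd 1 (pd 2 Φ2)) x - pd 0 (pd 1 (pd 1 Φ4)) x - pd 0 (pd 1 (pd 0 Φ5)) x := by
    rw [show (fun x => pd 2 Φ2 x - pd 1 Φ4 x - pd 0 Φ5 x)
        = fun x => (fun y => pd 2 Φ2 y - pd 1 Φ4 y) x - pd 0 Φ5 x from rfl,
      pd_sub ((d2 2).sub (d4 1)) (d5 0), pd_sub (d2 2) (d4 1),
      show (fun x => (fun x => pd 1 (pd 2 Φ2) x - pd 1 (pd 1 Φ4) x) x - pd 1 (pd 0 Φ5) x)
        = fun x => (fun y => pd 1 (pd 2 Φ2) y - pd 1 (pd 1 Φ4) y) x - pd 1 (pd 0 Φ5) x from rfl,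
      pd_sub ((pd_contDiff (d2 2) 1).sub (pd_contDiff (d4 1) 1)) (pd_contDiff (d5 0) 1),
      pd_sub (pd_contDiff (d2 2) 1) (pd_contDiff (d4 1) 1)]
  have E4 : pd 2 (fun x => pd 1 (pd 1 Φ1) x + pd 0 (pd 0 Φ3) x - pd 0 (pd 1 Φ2) x) x
      = pd 2 (pd 1 (pd 1 Φ1)) x + pd 2 (pd 0 (pd 0 Φ3)) x - pd 2 (pd 0 (pd 1 Φ2)) x := by
    rw [show (fun x => pd 1 (pd 1 Φ1) x + pd 0 (pd 0 Φ3) x - pd 0 (pd 1 Φ2) x)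
        = fun x => (fun y => pd 1 (pd 1 Φ1) y + pd 0 (pd 0 Φ3) y) x - pd 0 (pd 1 Φ2) x from rfl,
      pd_sub ((pd_contDiff (d1 1) 1).add (pd_contDiff (d3 0) 0)) (pd_contDiff (d2 1) 0),
      pd_add (pd_contDiff (d1 1) 1) (pd_contDiff (d3 0) 0)]
  rw [E1, E2, E3, E4]
  -- commute derivatives
  have c1 : pd 1 (pd 1 (pd 2 Φ1)) = pd 2 (pd 1 (pd 1 Φ1)) := by
    rw [pd_comm h1 1 2, pd_comm (d1 1) 1 2]
  have c4 : pd 1 (pd 1 (pd 0 Φ4)) = pd 0 (pd 1 (pd 1 Φ4)) := by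
    rw [pd_comm h4 1 0, pd_comm (d4 1) 1 0]
  have c3 : pd 0 (pd 0 (pd 2 Φ3)) = pd 2 (pd 0 (pd 0 Φ3)) := by
    rw [pd_comm h3 0 2, pd_comm (d3 0) 0 2]
  have c5 : pd 0 (pd 0 (pd 1 Φ5)) = pd 0 (pd 1 (pd 0 Φ5)) := by
    rw [pd_comm h5 0 1]
  have c2 : pd 0 (pd 1 (pd 2 Φ2)) = pd 2 (pd 0 (pd 1 Φ2)) := by
    rw [pd_comm h2 1 2, pd_comm (d2 1) 0 2]
  rw [c1, c2, c3, c4, c5]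
  ring
end

section
/- Let y : ℝ³ → ℝ be smooth and set u = ∂₂∂₂ y and v = ∂₃∂₃ y − x₂ · ∂₁ y. Then the identity 2 ∂₁∂₁ y = ∂₃⁴ u − ∂₂∂₂∂₃∂₃ v − 2 x₂ · ∂₁∂₃∂₃ u + x₂ · ∂₁∂₂∂₂ v − 2 ∂₁∂₂ v + x₂² · ∂₁∂₁ u holds identically (so ∂₁∂₁ y is a fourth-order differential consequence of u and v). -/
lemma coord_smooth : ContDiff ℝ (⊤ : ℕ∞) (fun x : Fin 3 → ℝ => x 1) :=
  (ContinuousLinearMap.proj 1 : (Fin 3 → ℝ) →L[ℝ] ℝ).contDiff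

lemma pd_coord_mul {f : (Fin 3 → ℝ) → ℝ} (hf : ContDiff ℝ (⊤ : ℕ∞) f) (i : Fin 3) :
    pd i (fun x => x 1 * f x) =
      fun x => (Pi.single i (1:ℝ) : Fin 3 → ℝ) 1 * f x + x 1 * pd i f x := by
  funext x
  simp only [pd]
  rw [fderiv_fun_mul (coord_smooth.differentiable (by simp) x) (hf.differentiable (by simp) x)]
  have h1 : fderiv ℝ (fun x : Fin 3 → ℝ => x 1) x =
      (ContinuousLinearMap.proj 1 : (Fin 3 → ℝ) →L[ℝ] ℝ) :=
    (ContinuousLinearMap.proj 1 : (Fin 3 → ℝ) →L[ℝ] ℝ).fderiv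
  simp [h1, mul_comm]
  ring

lemma pd_pd {f : (Fin 3 → ℝ) → ℝ} (hf : ContDiff ℝ (⊤ : ℕ∞) f) (i j : Fin 3) (x : Fin 3 → ℝ) :
    pd i (pd j f) x = (fderiv ℝ (fderiv ℝ f) x) (Pi.single i 1) (Pi.single j 1) := by
  simp only [pd]
  have : (fun z => fderiv ℝ f z (Pi.single j 1)) = fun z => (fderiv ℝ f z) (Pi.single j 1) := rfl
  rw [show (pd j f) = fun z => (fderiv ℝ f z) (Pi.single j 1) from rfl,
    fderiv_clm_apply ((hf.fderiv_right (m := (⊤ : ℕ∞)) (by simp)).differentiable (by simp) x)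
    (differentiableAt_const _)]
  simp

lemma sm_add {f g : (Fin 3 → ℝ) → ℝ} (hf : ContDiff ℝ (⊤ : ℕ∞) f) (hg : ContDiff ℝ (⊤ : ℕ∞) g) :
    ContDiff ℝ (⊤ : ℕ∞) (fun x => f x + g x) := hf.add hg

lemma sm_sub {f g : (Fin 3 → ℝ) → ℝ} (hf : ContDiff ℝ (⊤ : ℕ∞) f) (hg : ContDiff ℝ (⊤ : ℕ∞) g) :
    ContDiff ℝ (⊤ : ℕ∞) (fun x => f x - g x) := hf.sub hg

lemma sm_mul {f : (Fin 3 → ℝ) → ℝ} (hf : ContDiff ℝ (⊤ : ℕ∞) f) :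
    ContDiff ℝ (⊤ : ℕ∞) (fun x => x 1 * f x) := coord_smooth.mul hf

lemma pd0_mul {f : (Fin 3 → ℝ) → ℝ} (hf : ContDiff ℝ (⊤ : ℕ∞) f) :
    pd 0 (fun x => x 1 * f x) = fun x => x 1 * pd 0 f x := by
  rw [pd_coord_mul hf]; funext x; simp [Pi.single_apply]

lemma pd1_mul {f : (Fin 3 → ℝ) → ℝ} (hf : ContDiff ℝ (⊤ : ℕ∞) f) :
    pd 1 (fun x => x 1 * f x) = fun x => f x + x 1 * pd 1 f x := by
  rw [pd_coord_mul hf]; funext x; simp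

lemma pd2_mul {f : (Fin 3 → ℝ) → ℝ} (hf : ContDiff ℝ (⊤ : ℕ∞) f) :
    pd 2 (fun x => x 1 * f x) = fun x => x 1 * pd 2 f x := by
  rw [pd_coord_mul hf]; funext x; simp [Pi.single_apply]

lemma comm10 {f : (Fin 3 → ℝ) → ℝ} (hf : ContDiff ℝ (⊤ : ℕ∞) f) :
    pd 1 (pd 0 f) = pd 0 (pd 1 f) := pd_comm hf 1 0

lemma comm20 {f : (Fin 3 → ℝ) → ℝ} (hf : ContDiff ℝ (⊤ : ℕ∞) f) :
    pd 2 (pd 0 f) = pd 0 (pd 2 f) := pd_comm hf 2 0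

lemma comm21 {f : (Fin 3 → ℝ) → ℝ} (hf : ContDiff ℝ (⊤ : ℕ∞) f) :
    pd 2 (pd 1 f) = pd 1 (pd 2 f) := pd_comm hf 2 1

theorem stmt_13 (y : (Fin 3 → ℝ) → ℝ) (hy : ContDiff ℝ (⊤ : ℕ∞) y)
    (u v : (Fin 3 → ℝ) → ℝ)
    (hu : u = pd 1 (pd 1 y))
    (hv : v = fun x => pd 2 (pd 2 y) x - x 1 * pd 0 y x) :
    ∀ x, 2 * pd 0 (pd 0 y) x =
      pd 2 (pd 2 (pd 2 (pd 2 u))) x - pd 1 (pd 1 (pd 2 (pd 2 v))) x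
      - 2 * x 1 * pd 0 (pd 2 (pd 2 u)) x + x 1 * pd 0 (pd 1 (pd 1 v)) x
      - 2 * pd 0 (pd 1 v) x + (x 1) ^ 2 * pd 0 (pd 0 u) x := by
  subst hu hv
  intro x
  simp (config := { maxDischargeDepth := 12 }) only [hy, pd_contDiff, sm_sub, sm_add, sm_mul, pd_sub, pd_add, pd0_mul, pd1_mul, pd2_mul,
    comm10, comm20, comm21]
  ring
end
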